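/- Under the infeasible two-step setup, assume moreover: b ∈ ℝ^m, c ∈ ℝ^n, λ^k, λ^{k+1} ∈ ℝ^m and dual components Δλ^k, Δλ′ are given with λ^{k+1} = λ^k + ᾱ_kΔλ^k; the residuals r_b^k = Ax^k − b, r_c^k = Aᵀλ^k + z^k − c satisfy AΔx^k = −r_b^k, AᵀΔλ^k + Δz^k = −r_c^k, AΔx′ = −r_b^{k+1}, AᵀΔλ′ + Δz′ = −r_c^{k+1} with r_b^{k+1} = (1 − ᾱ_k)r_b^k and r_c^{k+1} = (1 − ᾱ_k)r_c^k; there exist ν_k ≥ 0 and a primal–dual solution (x*, λ*, z*) with Ax* = b, Aᵀλ* + z* = c, such that r_b^k = ν_k(Ax⁰ − b) and r_c^k = ν_k(Aᵀλ⁰ + z⁰ − c), where x⁰ = ξe, z⁰ = ξe, λ⁰ = 0 for some ξ > 0 and ‖x⁰ − x*‖ ≤ ξ, ‖z⁰ − z*‖ ≤ ξ; ν_k(‖x^k‖₁ + ‖z^k‖₁) ≤ (4β/ξ)·n·μ_k for a constant β ≥ 1; and the bound ‖(x^k∘z^k)^{−1/2}∘[z^k∘(ᾱ_kΔx^k + ᾱΔx′)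 + x^k∘(ᾱ_kΔz^k + ᾱΔz′)]‖ ≤ γ^{−1/2}[(σ_max + γ^{−1})(ᾱ_k + ᾱ) + (ᾱ_k + C₃)ᾱᾱ_kω²]n^{5/2}μ_k^{1/2} holds. Then ‖(D^k)⁻¹(ᾱ_kΔx^k + ᾱΔx′)‖ ≤ [ (σ_max + γ^{−1} + 8β)(ᾱ_k + ᾱ) + (ᾱ_k + C₃)ω²ᾱ_kᾱ ]·γ^{−1/2}·n^{5/2}·μ_k^{1/2}, and the same bound holds for ‖D^k(ᾱ_kΔz^k + ᾱΔz′)‖. -/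

import Mathlib

/-
Put u = ᾱ_k Δx^k + ᾱ Δx′, v = ᾱ_k Δz^k + ᾱ Δz′ and τ = ᾱ_k + ᾱ(1 - ᾱ_k). Then A u = -τ r_b^k and
v + Aᵀ(ᾱ_k Δλ^k + ᾱ Δλ′) = -τ r_c^k, and r_b^k, r_c^k are ν_k times the residuals of (x⁰, 0, z⁰); so
with κ = τ ν_k the vector u + κ(x⁰ - x*) lies in ker A and v + κ(z⁰ - z*) in the range of Aᵀ.
They are orthogonal, hence so are their images under D⁻¹ and D, and Pythagoras bounds ‖D⁻¹u‖ and
‖Dv‖ by the given bound on ‖D⁻¹u + Dv‖ plus 2κ(‖D⁻¹(x⁰ - x*)‖ + ‖D(z⁰ - z*)‖). Since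
|x⁰ - x*| ≤ ξ componentwise and x_i z_i ≥ γμ_k, these two norms are at most ξ‖z‖₁/√(γμ_k) and
ξ‖x‖₁/√(γμ_k), and ν_k(‖x‖₁ + ‖z‖₁) ≤ 4βnμ_k/ξ makes the correction at most 8βτ n √μ_k / √γ.
-/

open scoped BigOperators

/-- Euclidean norm of a finitely-indexed real vector. -/
noncomputable def enorm {ι : Type*} [Fintype ι] (v : ι → ℝ) : ℝ :=
  Real.sqrt (∑ i, v i ^ 2)

/-- One-norm of a finitely-indexed real vector. -/
def onenorm {ι : Type*} [Fintype ι] (v : ι → ℝ) : ℝ := ∑ i, |v i|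

open Matrix

section VectorNorms

variable {ι : Type*} [Fintype ι]

theorem enorm_eq_norm_toLp (v : ι → ℝ) :
    _root_.enorm v = ‖(WithLp.toLp 2 v : EuclideanSpace ℝ ι)‖ := by
  simp [_root_.enorm, EuclideanSpace.norm_eq]

theorem abs_apply_le_enorm (v : ι → ℝ) (i : ι) : |v i| ≤ _root_.enorm v := by
  rw [enorm_eq_norm_toLp]
  exact PiLp.norm_apply_le (WithLp.toLp 2 v : EuclideanSpace ℝ ι) i

theorem enorm_le_onenorm (v : ι → ℝ) : _root_.enorm v ≤ onenorm v := by
  refine Real.sqrt_le_iff.2 ⟨Finset.sum_nonneg fun i _ => abs_nonneg _, ?_⟩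
  simpa only [onenorm, sq_abs] using
    Finset.sum_sq_le_sq_sum_of_nonneg (s := Finset.univ) fun i _ => abs_nonneg (v i)

end VectorNorms

section InnerProduct

variable {E : Type*} [NormedAddCommGroup E] [InnerProductSpace ℝ E]

theorem norm_le_norm_add_of_inner_eq_zero {x y : E} (h : inner ℝ x y = 0) :
    ‖x‖ ≤ ‖x + y‖ := by
  have := norm_add_sq_eq_norm_sq_add_norm_sq_real h
  nlinarith [norm_nonneg x, norm_nonneg (x + y), mul_self_nonneg ‖y‖]

theorem norm_le_norm_add_add_two_mul_of_inner_add_smul_eq_zero {u v p q : E} {κ : ℝ}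
    (hκ : 0 ≤ κ) (h : inner ℝ (u + κ • p) (v + κ • q) = 0) :
    ‖u‖ ≤ ‖u + v‖ + 2 * κ * (‖p‖ + ‖q‖) := by
  have hnorm_smul : ∀ w : E, ‖κ • w‖ = κ * ‖w‖ := fun w => by
    rw [norm_smul, Real.norm_of_nonneg hκ]
  have hu : ‖u‖ ≤ ‖u + κ • p‖ + κ * ‖p‖ := by
    simpa [hnorm_smul] using norm_sub_le (u + κ • p) (κ • p)
  have hsum : ‖u + κ • p + (v + κ • q)‖ ≤ ‖u + v‖ + κ * ‖p‖ + κ * ‖q‖ := by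
    rw [show u + κ • p + (v + κ • q) = u + v + κ • p + κ • q by abel, ← hnorm_smul,
      ← hnorm_smul]
    exact norm_add₃_le
  have := norm_le_norm_add_of_inner_eq_zero h
  nlinarith [norm_nonneg p, norm_nonneg q]

end InnerProduct

section PrimalDual

variable {m n R : Type*} [CommRing R] (A : Matrix m n R)

theorem dotProduct_transpose_mulVec_eq_zero [Fintype m] [Fintype n] {p : n → R}
    (hp : A *ᵥ p = 0) (g : m → R) :
    p ⬝ᵥ Aᵀ *ᵥ g = 0 := by
  rw [dotProduct_mulVec, vecMul_transpose, hp, zero_dotProduct]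

theorem mulVec_combination_eq_zero [Fintype n] {Δx Δx' x₀ x' : n → R} {b r : m → R} {a α ν : R}
    (hΔx : A *ᵥ Δx = -r) (hΔx' : A *ᵥ Δx' = -((1 - a) • r))
    (hr : r = ν • (A *ᵥ x₀ - b)) (hx' : A *ᵥ x' = b) :
    A *ᵥ (a • Δx + α • Δx' + ((a + α * (1 - a)) * ν) • (x₀ - x')) = 0 := by
  subst hr hx'
  simp only [mulVec_add, mulVec_smul, mulVec_sub, hΔx, hΔx']
  module

theorem combination_eq_transpose_mulVec [Fintype m] {Δz Δz' z₀ z' c r : n → R}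
    {Δl Δl' l₀ l' : m → R} {a α ν : R}
    (hΔz : Aᵀ *ᵥ Δl + Δz = -r) (hΔz' : Aᵀ *ᵥ Δl' + Δz' = -((1 - a) • r))
    (hr : r = ν • (Aᵀ *ᵥ l₀ + z₀ - c)) (hz' : Aᵀ *ᵥ l' + z' = c) :
    a • Δz + α • Δz' + ((a + α * (1 - a)) * ν) • (z₀ - z')
      = Aᵀ *ᵥ (((a + α * (1 - a)) * ν) • (l' - l₀) - (a • Δl + α • Δl')) := by
  subst hr
  simp only [mulVec_add, mulVec_smul, mulVec_sub]
  linear_combination (norm := module) a • hΔz + α • hΔz' - ((a + α * (1 - a)) * ν) • hz'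

end PrimalDual

theorem sqrt_div_mul_sqrt_div_self {x z : ℝ} (hx : 0 < x) (hz : 0 < z) :
    √(z / x) * √(x / z) = 1 := by
  rw [← Real.sqrt_mul (div_pos hz hx).le, div_mul_div_comm, mul_comm z,
    div_self (mul_pos hx hz).ne', Real.sqrt_one]

theorem one_div_sqrt_mul_mul_add_mul {x z : ℝ} (hx : 0 < x) (hz : 0 < z) (a b : ℝ) :
    1 / √(x * z) * (z * a + x * b) = √(z / x) * a + √(x / z) * b := by
  rw [Real.sqrt_div hz.le, Real.sqrt_div hx.le, Real.sqrt_mul hx.le]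
  field_simp
  linear_combination (-a) * Real.mul_self_sqrt hz.le + (-b) * Real.mul_self_sqrt hx.le

theorem enorm_mul_le_of_dotProduct_add_smul_eq_zero {ι : Type*} [Fintype ι]
    {φ ψ u v d e : ι → ℝ} {κ : ℝ} (hκ : 0 ≤ κ) (hφψ : ∀ i, φ i * ψ i = 1)
    (h : (u + κ • d) ⬝ᵥ (v + κ • e) = 0) :
    _root_.enorm (fun i => φ i * u i) ≤ _root_.enorm (fun i => φ i * u i + ψ i * v i)
        + 2 * κ * (_root_.enorm (fun i => φ i * d i) + _root_.enorm (fun i => ψ i * e i)) ∧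
    _root_.enorm (fun i => ψ i * v i) ≤ _root_.enorm (fun i => φ i * u i + ψ i * v i)
        + 2 * κ * (_root_.enorm (fun i => φ i * d i) + _root_.enorm (fun i => ψ i * e i)) := by
  let toE : (ι → ℝ) → EuclideanSpace ℝ ι := WithLp.toLp 2
  have hinner :
      inner ℝ (toE (φ * u) + κ • toE (φ * d)) (toE (ψ * v) + κ • toE (ψ * e)) = 0 := by
    rw [← h, ← WithLp.toLp_smul, ← WithLp.toLp_add, ← WithLp.toLp_smul, ← WithLp.toLp_add,
      EuclideanSpace.inner_toLp_toLp, dotProduct_comm]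
    refine Finset.sum_congr rfl fun i _ => ?_
    simp only [Pi.add_apply, Pi.smul_apply, Pi.mul_apply, smul_eq_mul, star_trivial]
    linear_combination (u i + κ * d i) * (v i + κ * e i) * hφψ i
  have hu := norm_le_norm_add_add_two_mul_of_inner_add_smul_eq_zero hκ hinner
  have hv := norm_le_norm_add_add_two_mul_of_inner_add_smul_eq_zero hκ
    ((real_inner_comm _ _).trans hinner)
  simp only [enorm_eq_norm_toLp]
  rw [add_comm (toE (ψ * v)), add_comm ‖toE (ψ * e)‖] at hv
  exact ⟨hu, hv⟩

theorem sqrt_div_le_div_sqrt {x z g : ℝ} (hx : 0 < x) (hz : 0 ≤ z) (hg : 0 < g)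
    (hxz : g ≤ x * z) : √(z / x) ≤ z / √g := by
  rw [Real.sqrt_le_iff, div_pow, Real.sq_sqrt hg.le, div_le_div_iff₀ hx hg]
  exact ⟨by positivity, by nlinarith⟩

theorem enorm_sqrt_div_mul_le {ι : Type*} [Fintype ι] {x z d : ι → ℝ} {g ξ : ℝ}
    (hx : ∀ i, 0 < x i) (hz : ∀ i, 0 < z i) (hg : 0 < g) (hxz : ∀ i, g ≤ x i * z i)
    (hd : ∀ i, |d i| ≤ ξ) :
    _root_.enorm (fun i => √(z i / x i) * d i) ≤ ξ / √g * onenorm z := by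
  refine (enorm_le_onenorm _).trans ?_
  rw [onenorm, onenorm, Finset.mul_sum]
  refine Finset.sum_le_sum fun i _ => ?_
  rw [abs_mul, abs_of_nonneg (Real.sqrt_nonneg _), abs_of_pos (hz i), div_mul_comm]
  exact mul_le_mul (sqrt_div_le_div_sqrt (hx i) (hz i).le hg (hxz i)) (hd i) (abs_nonneg _)
    (by have := hz i; positivity)

theorem div_sqrt_mul_mul_le {ξ γ μ β N t : ℝ} (hξ : 0 < ξ) (hγ : 0 < γ) (hμ : 0 < μ)
    (hN : 1 ≤ N) (hβ : 0 ≤ β) (ht : t ≤ 4 * β / ξ * N * μ) :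
    ξ / √(γ * μ) * t ≤ 4 * β * (γ ^ (-(1:ℝ)/2) * N ^ ((5:ℝ)/2) * μ ^ ((1:ℝ)/2)) := by
  have hN52 : N ≤ N ^ ((5:ℝ)/2) := by
    simpa using Real.rpow_le_rpow_of_exponent_le hN (show (1:ℝ) ≤ 5/2 by norm_num)
  have hγ' : γ ^ (-(1:ℝ)/2) = (√γ)⁻¹ := by
    rw [neg_div, Real.rpow_neg hγ.le, Real.sqrt_eq_rpow]
  have hμ' : μ ^ ((1:ℝ)/2) = √μ := (Real.sqrt_eq_rpow μ).symm
  calc ξ / √(γ * μ) * t ≤ ξ / √(γ * μ) * (4 * β / ξ * N * μ) := by gcongr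
    _ = 4 * β * ((√γ)⁻¹ * N * √μ) := by
      rw [Real.sqrt_mul hγ.le]
      field_simp
      rw [Real.sq_sqrt hμ.le]
      ring
    _ ≤ 4 * β * (γ ^ (-(1:ℝ)/2) * N ^ ((5:ℝ)/2) * μ ^ ((1:ℝ)/2)) := by
      rw [hγ', hμ']
      gcongr

theorem mul_scaled_start_error_le {ι : Type*} [Fintype ι] {x z x' z' : ι → ℝ}
    {γ μ ν ξ β N : ℝ} (hx : ∀ i, 0 < x i) (hz : ∀ i, 0 < z i) (hγ : 0 < γ) (hμ : 0 < μ)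
    (hxz : ∀ i, γ * μ ≤ x i * z i) (hν : 0 ≤ ν) (hξ : 0 < ξ)
    (hx' : _root_.enorm (fun i => ξ - x' i) ≤ ξ) (hz' : _root_.enorm (fun i => ξ - z' i) ≤ ξ)
    (hN : 1 ≤ N) (hβ : 0 ≤ β) (h1 : ν * (onenorm x + onenorm z) ≤ 4 * β / ξ * N * μ) :
    ν * (_root_.enorm (fun i => √(z i / x i) * (ξ - x' i))
        + _root_.enorm (fun i => √(x i / z i) * (ξ - z' i)))
      ≤ 4 * β * (γ ^ (-(1:ℝ)/2) * N ^ ((5:ℝ)/2) * μ ^ ((1:ℝ)/2)) := by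
  have hdx := enorm_sqrt_div_mul_le hx hz (mul_pos hγ hμ) hxz
    fun i => (abs_apply_le_enorm _ i).trans hx'
  have hdz := enorm_sqrt_div_mul_le hz hx (mul_pos hγ hμ)
    (fun i => mul_comm (x i) (z i) ▸ hxz i) fun i => (abs_apply_le_enorm _ i).trans hz'
  calc _ ≤ ν * (ξ / √(γ * μ) * onenorm z + ξ / √(γ * μ) * onenorm x) := by gcongr
    _ = ξ / √(γ * μ) * (ν * (onenorm x + onenorm z)) := by ring
    _ ≤ _ := div_sqrt_mul_mul_le hξ hγ hμ hN hβ h1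

theorem inf_scaled_composite_direction_bound_general
    (n m : ℕ) (hn : 1 ≤ n)
    (A : Matrix (Fin m) (Fin n) ℝ)
    (γ σmax ω C₃ : ℝ)
    (hγ : γ ∈ Set.Ioo (0:ℝ) 1)
    (xk zk : Fin n → ℝ) (hxk : ∀ i, 0 < xk i) (hzk : ∀ i, 0 < zk i)
    (μk : ℝ) (hμk : μk = (∑ i, xk i * zk i) / n)
    (hNbr : ∀ i, γ * μk ≤ xk i * zk i ∧ xk i * zk i ≤ μk / γ)
    (Δx Δz : Fin n → ℝ)
    (αk : ℝ) (hαk : αk ∈ Set.Ioc (0:ℝ) 1)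
    (Δx' Δz' : Fin n → ℝ)
    (α : ℝ) (hα : α ∈ Set.Icc (0:ℝ) 1)
    -- additional hypotheses: residuals, special starting point, solution point
    (b : Fin m → ℝ) (c : Fin n → ℝ)
    (Δlam Δlam' : Fin m → ℝ)
    (rbk : Fin m → ℝ) (rck : Fin n → ℝ)
    (hADx : A.mulVec Δx = fun i => -rbk i)
    (hADl : (Matrix.transpose A).mulVec Δlam + Δz = fun i => -rck i)
    (rbk1 : Fin m → ℝ) (rck1 : Fin n → ℝ)
    (hrbk1 : rbk1 = fun i => (1 - αk) * rbk i)
    (hrck1 : rck1 = fun i => (1 - αk) * rck i)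
    (hADx' : A.mulVec Δx' = fun i => -rbk1 i)
    (hADl' : (Matrix.transpose A).mulVec Δlam' + Δz' = fun i => -rck1 i)
    (νk : ℝ) (hνk : 0 ≤ νk)
    (xstar zstar : Fin n → ℝ) (lamstar : Fin m → ℝ)
    (hstar1 : A.mulVec xstar = b)
    (hstar2 : (Matrix.transpose A).mulVec lamstar + zstar = c)
    (ξ : ℝ) (hξ : 0 < ξ)
    (hrb0 : rbk = fun i => νk * (A.mulVec (fun _ => ξ) i - b i))
    (hrc0 : rck = fun i =>
      νk * ((Matrix.transpose A).mulVec (fun _ => (0:ℝ)) i + ξ - c i))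
    (hx0 : _root_.enorm (fun i => ξ - xstar i) ≤ ξ)
    (hz0 : _root_.enorm (fun i => ξ - zstar i) ≤ ξ)
    (β : ℝ) (hβ : 1 ≤ β)
    (h1norm : νk * (onenorm xk + onenorm zk) ≤ 4 * β / ξ * n * μk)
    -- the scaled combined third-row residual bound from the preceding lemma
    (hthird : _root_.enorm (fun i => (1 / Real.sqrt (xk i * zk i)) *
        (zk i * (αk * Δx i + α * Δx' i) + xk i * (αk * Δz i + α * Δz' i)))
      ≤ γ ^ (-(1:ℝ)/2) *
        ((σmax + γ⁻¹) * (αk + α) + (αk + C₃) * α * αk * ω ^ 2) *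
        (n:ℝ) ^ ((5:ℝ)/2) * μk ^ ((1:ℝ)/2)) :
    _root_.enorm (fun i => Real.sqrt (zk i / xk i) * (αk * Δx i + α * Δx' i))
      ≤ ((σmax + γ⁻¹ + 8 * β) * (αk + α) + (αk + C₃) * ω ^ 2 * αk * α) *
        γ ^ (-(1:ℝ)/2) * (n:ℝ) ^ ((5:ℝ)/2) * μk ^ ((1:ℝ)/2) ∧
    _root_.enorm (fun i => Real.sqrt (xk i / zk i) * (αk * Δz i + α * Δz' i))
      ≤ ((σmax + γ⁻¹ + 8 * β) * (αk + α) + (αk + C₃) * ω ^ 2 * αk * α) *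
        γ ^ (-(1:ℝ)/2) * (n:ℝ) ^ ((5:ℝ)/2) * μk ^ ((1:ℝ)/2) := by
  obtain ⟨hγ0, -⟩ := hγ
  obtain ⟨hαk0, hαk1⟩ := hαk
  obtain ⟨hα0, hα1⟩ := hα
  subst hrbk1 hrck1
  have hμ0 : 0 < μk := by
    rw [hμk]
    exact div_pos (Finset.sum_pos (fun i _ => mul_pos (hxk i) (hzk i))
      ⟨⟨0, hn⟩, Finset.mem_univ _⟩) (by exact_mod_cast hn)
  set τ := αk + α * (1 - αk)
  have hτ0 : 0 ≤ τ := by nlinarith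
  have hτ : τ ≤ αk + α := by nlinarith
  have horth : (αk • Δx + α • Δx' + (τ * νk) • ((fun _ => ξ) - xstar)) ⬝ᵥ
      (αk • Δz + α • Δz' + (τ * νk) • ((fun _ => ξ) - zstar)) = 0 := by
    rw [combination_eq_transpose_mulVec A (l₀ := 0) hADl hADl' hrc0 hstar2]
    exact dotProduct_transpose_mulVec_eq_zero A
      (mulVec_combination_eq_zero A hADx hADx' hrb0 hstar1) _
  obtain ⟨hu, hv⟩ := enorm_mul_le_of_dotProduct_add_smul_eq_zero
    (u := fun i => αk * Δx i + α * Δx' i) (v := fun i => αk * Δz i + α * Δz' i)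
    (d := fun i => ξ - xstar i) (e := fun i => ξ - zstar i) (mul_nonneg hτ0 hνk)
    (fun i => sqrt_div_mul_sqrt_div_self (hxk i) (hzk i)) horth
  simp only [one_div_sqrt_mul_mul_add_mul (hxk _) (hzk _)] at hthird
  have hstart := mul_scaled_start_error_le hxk hzk hγ0 hμ0 (fun i => (hNbr i).1) hνk hξ hx0 hz0
    (by exact_mod_cast hn) (by linarith) h1norm
  have hcorr := mul_le_mul hτ hstart
    (mul_nonneg hνk (add_nonneg (Real.sqrt_nonneg _) (Real.sqrt_nonneg _))) (by linarith)
  constructor <;> linarith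

/-- Infeasible-case bounds on the scaled composite directions
`(D^k)⁻¹(αkΔx^k + αΔx')` and `D^k(αkΔz^k + αΔz')`. -/
theorem inf_scaled_composite_direction_bound
    (n m : ℕ) (hn : 1 ≤ n) (hm : 1 ≤ m)
    (A : Matrix (Fin m) (Fin n) ℝ)
    (γ σmin σmax ω C₃ : ℝ)
    (hγ : γ ∈ Set.Ioo (0:ℝ) 1)
    (hσ0 : 0 < σmin) (hσ : σmin ≤ σmax) (hσ1 : σmax < 1)
    (hω : 0 < ω) (hC₃ : 1 ≤ C₃)
    (xk zk : Fin n → ℝ) (hxk : ∀ i, 0 < xk i) (hzk : ∀ i, 0 < zk i)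
    (μk : ℝ) (hμk : μk = (∑ i, xk i * zk i) / n)
    (hNbr : ∀ i, γ * μk ≤ xk i * zk i ∧ xk i * zk i ≤ μk / γ)
    (σk : ℝ) (hσk : σmin ≤ σk ∧ σk ≤ σmax)
    (Δx Δz : Fin n → ℝ)
    (hNewton : ∀ i, zk i * Δx i + xk i * Δz i = σk * μk - xk i * zk i)
    (hDx : _root_.enorm (fun i => Real.sqrt (zk i / xk i) * Δx i) ≤ ω * n * Real.sqrt μk)
    (hDz : _root_.enorm (fun i => Real.sqrt (xk i / zk i) * Δz i) ≤ ω * n * Real.sqrt μk)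
    (αk : ℝ) (hαk : αk ∈ Set.Ioc (0:ℝ) 1)
    (xk1 zk1 : Fin n → ℝ)
    (hxk1 : xk1 = fun i => xk i + αk * Δx i)
    (hzk1 : zk1 = fun i => zk i + αk * Δz i)
    (μk1 : ℝ) (hμk1 : μk1 = (∑ i, xk1 i * zk1 i) / n) (hμdec : μk1 ≤ μk)
    (σk1 : ℝ) (hσk1 : σmin ≤ σk1 ∧ σk1 ≤ σmax)
    (γ₁ : ℝ) (hγ₁ : |γ₁| ≤ C₃ * Real.sqrt n / αk)
    (Δx' Δz' : Fin n → ℝ)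
    (hQN : ∀ i, zk i * Δx' i + xk i * Δz' i
      = σk1 * μk1 - xk1 i * zk1 i - γ₁ * αk ^ 2 * (Δx i * Δz i))
    (α : ℝ) (hα : α ∈ Set.Icc (0:ℝ) 1)
    -- additional hypotheses: residuals, special starting point, solution point
    (b : Fin m → ℝ) (c : Fin n → ℝ)
    (lamk lamk1 : Fin m → ℝ) (Δlam Δlam' : Fin m → ℝ)
    (hlamk1 : lamk1 = fun i => lamk i + αk * Δlam i)
    (rbk : Fin m → ℝ) (rck : Fin n → ℝ)
    (hrbk : rbk = A.mulVec xk - b)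
    (hrck : rck = (Matrix.transpose A).mulVec lamk + zk - c)
    (hADx : A.mulVec Δx = fun i => -rbk i)
    (hADl : (Matrix.transpose A).mulVec Δlam + Δz = fun i => -rck i)
    (rbk1 : Fin m → ℝ) (rck1 : Fin n → ℝ)
    (hrbk1 : rbk1 = fun i => (1 - αk) * rbk i)
    (hrck1 : rck1 = fun i => (1 - αk) * rck i)
    (hADx' : A.mulVec Δx' = fun i => -rbk1 i)
    (hADl' : (Matrix.transpose A).mulVec Δlam' + Δz' = fun i => -rck1 i)
    (νk : ℝ) (hνk : 0 ≤ νk)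
    (xstar zstar : Fin n → ℝ) (lamstar : Fin m → ℝ)
    (hstar1 : A.mulVec xstar = b)
    (hstar2 : (Matrix.transpose A).mulVec lamstar + zstar = c)
    (ξ : ℝ) (hξ : 0 < ξ)
    (hrb0 : rbk = fun i => νk * (A.mulVec (fun _ => ξ) i - b i))
    (hrc0 : rck = fun i =>
      νk * ((Matrix.transpose A).mulVec (fun _ => (0:ℝ)) i + ξ - c i))
    (hx0 : _root_.enorm (fun i => ξ - xstar i) ≤ ξ)
    (hz0 : _root_.enorm (fun i => ξ - zstar i) ≤ ξ)
    (β : ℝ) (hβ : 1 ≤ β)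
    (h1norm : νk * (onenorm xk + onenorm zk) ≤ 4 * β / ξ * n * μk)
    -- the scaled combined third-row residual bound from the preceding lemma
    (hthird : _root_.enorm (fun i => (1 / Real.sqrt (xk i * zk i)) *
        (zk i * (αk * Δx i + α * Δx' i) + xk i * (αk * Δz i + α * Δz' i)))
      ≤ γ ^ (-(1:ℝ)/2) *
        ((σmax + γ⁻¹) * (αk + α) + (αk + C₃) * α * αk * ω ^ 2) *
        (n:ℝ) ^ ((5:ℝ)/2) * μk ^ ((1:ℝ)/2)) :
    _root_.enorm (fun i => Real.sqrt (zk i / xk i) * (αk * Δx i + α * Δx' i))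
      ≤ ((σmax + γ⁻¹ + 8 * β) * (αk + α) + (αk + C₃) * ω ^ 2 * αk * α) *
        γ ^ (-(1:ℝ)/2) * (n:ℝ) ^ ((5:ℝ)/2) * μk ^ ((1:ℝ)/2) ∧
    _root_.enorm (fun i => Real.sqrt (xk i / zk i) * (αk * Δz i + α * Δz' i))
      ≤ ((σmax + γ⁻¹ + 8 * β) * (αk + α) + (αk + C₃) * ω ^ 2 * αk * α) *
        γ ^ (-(1:ℝ)/2) * (n:ℝ) ^ ((5:ℝ)/2) * μk ^ ((1:ℝ)/2) :=
  inf_scaled_composite_direction_bound_general n m hn A γ σmax ω C₃ hγ xk zk hxk hzk μk hμk hNbr Δx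
    Δz αk hαk Δx' Δz' α hα b c Δlam Δlam' rbk rck hADx hADl rbk1 rck1 hrbk1 hrck1 hADx' hADl' νk hνk
    xstar zstar lamstar hstar1 hstar2 ξ hξ hrb0 hrc0 hx0 hz0 β hβ h1norm hthird
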